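/- Let ω₁₁, ω₁₃, ω₁₅, ω₁₇ ∈ ℂ with |ω₁₁| ≤ 1 and |ω₁₁|² + 3|ω₁₃|² + 5|ω₁₅|² + 7|ω₁₇|² ≤ 1. Then |ω₁₇| + |ω₁₃|²/2 + |ω₁₁|⁴/12 ≤ 1/√7. -/

import Mathlib

/-!
Put `t = |ω₁₁|² + 3|ω₁₃|²`. The constraint gives `7|ω₁₇|² ≤ 1 - t`, and since
`(1 - t/2)² ≥ 1 - t` this yields `√7 |ω₁₇| ≤ 1 - t/2`. The remaining terms are absorbed
by `t/2`: from `√7 ≤ 3` and `|ω₁₁|⁴ ≤ |ω₁₁|²` we get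
`√7 (|ω₁₃|²/2 + |ω₁₁|⁴/12) ≤ (3|ω₁₃|² + |ω₁₁|²)/2`.
-/

lemma mul_sqrt_le_one_sub_half {n c t : ℝ} (hn : 0 ≤ n) (hc : 0 ≤ c) (ht : t ≤ 2)
    (h : n * c ^ 2 ≤ 1 - t) : c * √n ≤ 1 - t / 2 := by
  have hsq : (c * √n) ^ 2 ≤ (1 - t / 2) ^ 2 := by
    rw [mul_pow, Real.sq_sqrt hn]
    nlinarith [sq_nonneg t]
  exact (pow_le_pow_iff_left₀ (by positivity) (by linarith) two_ne_zero).1 hsq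

lemma sqrt_seven_le_three : √7 ≤ 3 := by
  rw [Real.sqrt_le_left (by norm_num)]
  norm_num

theorem stmt_16_general (ω₁₁ ω₁₃ ω₁₅ ω₁₇ : ℂ)
    (h : ‖ω₁₁‖ ^ 2 + 3 * ‖ω₁₃‖ ^ 2 +
      5 * ‖ω₁₅‖ ^ 2 + 7 * ‖ω₁₇‖ ^ 2 ≤ 1) :
    ‖ω₁₇‖ + ‖ω₁₃‖ ^ 2 / 2 + ‖ω₁₁‖ ^ 4 / 12 ≤
      1 / Real.sqrt 7 := by
  set a := ‖ω₁₁‖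
  set b := ‖ω₁₃‖
  set c := ‖ω₁₇‖
  have ha : 0 ≤ a := norm_nonneg _
  have hb2 : 0 ≤ b ^ 2 := sq_nonneg b
  have hc_bound : c * √7 ≤ 1 - (a ^ 2 + 3 * b ^ 2) / 2 :=
    mul_sqrt_le_one_sub_half (by norm_num) (norm_nonneg _) (by nlinarith [sq_nonneg a])
      (by nlinarith [sq_nonneg ‖ω₁₅‖])
  have ha2 : a ^ 2 ≤ 1 := by nlinarith [sq_nonneg ‖ω₁₅‖, sq_nonneg c]
  have ha4 : a ^ 4 ≤ a ^ 2 := by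
    calc a ^ 4 = a ^ 2 * a ^ 2 := by ring
      _ ≤ a ^ 2 * 1 := mul_le_mul_of_nonneg_left ha2 (sq_nonneg a)
      _ = a ^ 2 := mul_one _
  have hrest : (b ^ 2 / 2 + a ^ 4 / 12) * √7 ≤ (a ^ 2 + 3 * b ^ 2) / 2 := by
    nlinarith [sqrt_seven_le_three, Real.sqrt_nonneg 7, pow_nonneg ha 4]
  rw [le_div_iff₀ (by positivity)]
  linarith

theorem stmt_16 (ω₁₁ ω₁₃ ω₁₅ ω₁₇ : ℂ) (h1 : ‖ω₁₁‖ ≤ 1)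
    (h : ‖ω₁₁‖ ^ 2 + 3 * ‖ω₁₃‖ ^ 2 +
      5 * ‖ω₁₅‖ ^ 2 + 7 * ‖ω₁₇‖ ^ 2 ≤ 1) :
    ‖ω₁₇‖ + ‖ω₁₃‖ ^ 2 / 2 + ‖ω₁₁‖ ^ 4 / 12 ≤
      1 / Real.sqrt 7 :=
  stmt_16_general ω₁₁ ω₁₃ ω₁₅ ω₁₇ h
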